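/- (Pseudoscalar square in general dimension.) For every n ≥ 1, in the conformal geometric algebra CGAₙ the pseudoscalar Iₙ := ((…((ι(e₀) ∧ e₁) ∧ e₂) … ∧ eₙ) ∧ e∞) satisfies Iₙ² = (−1)^{n(n−1)/2}; consequently Iₙ⁻¹ = (−1)^{n(n−1)/2} Iₙ. -/

import Mathlib

open CliffordAlgebra

/-- The matrix of the CGA inner product on `Vₙ = ℝ^{n+2}`; index `0` corresponds to
`e₀`, indices `1, …, n` to the orthonormal `e₁, …, eₙ`, and index `n+1` to `e∞`. -/
def BmatN (n : ℕ) : Matrix (Fin (n + 2)) (Fin (n + 2)) ℝ := fun i j =>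
  if (i = 0 ∧ j = Fin.last (n + 1)) ∨ (i = Fin.last (n + 1) ∧ j = 0) then -1
  else if i = j ∧ i ≠ 0 ∧ i ≠ Fin.last (n + 1) then 1
  else 0

/-- The CGA quadratic form `Qₙ(a e₀ + Σᵢ xᵢeᵢ + b e∞) = Σᵢ xᵢ² − 2ab` on `ℝ^{n+2}`. -/
noncomputable def Qn (n : ℕ) : QuadraticForm ℝ (Fin (n + 2) → ℝ) := (BmatN n).toQuadraticMap'

/-- Outer (wedge) product of a multivector with a vector:
`A ∧ v := ½ (A ι(v) + ι(v) α(A))`, where `α` is the grade involution. -/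
noncomputable def wedgeVecN {n : ℕ} (A : CliffordAlgebra (Qn n)) (v : Fin (n + 2) → ℝ) :
    CliffordAlgebra (Qn n) :=
  (1 / 2 : ℝ) • (A * ι (Qn n) v + ι (Qn n) v * involute A)

/-- The pseudoscalar `Iₙ = ((…((e₀ ∧ e₁) ∧ e₂) … ∧ eₙ) ∧ e∞)` of `CGAₙ`. -/
noncomputable def In (n : ℕ) : CliffordAlgebra (Qn n) :=
  wedgeVecN
    ((List.finRange n).foldl
      (fun A i => wedgeVecN A (Pi.single (Fin.castSucc i.succ) 1))
      (ι (Qn n) (Pi.single 0 1)))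
    (Pi.single (Fin.last (n + 1)) 1)


/-!
Wedging a blade of pairwise orthogonal vectors with a vector orthogonal to all of them is just
the geometric product, so the inner folds build `e₀ e₁ ⋯ eₙ`. The last factor `e∞` is not
orthogonal to `e₀`; moving it past `E = e₁ ⋯ eₙ` and using `e₀ e∞ + e∞ e₀ = -2` gives
`Iₙ = (-1)ⁿ (e₀ e∞ + 1) E`. Since `e₀` is null, `(e₀ e∞ + 1)² = 1`; this factor commutes with
`E`, and `E² = (-1)^{n(n-1)/2}` because the `eᵢ` anticommute and square to `1`.
-/

theorem neg_one_pow_mul_neg_one_pow_self {R : Type*} [Monoid R] [HasDistribNeg R] (k : ℕ) :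
    (-1 : R) ^ k * (-1 : R) ^ k = 1 := by
  rw [← pow_add, ← two_mul, pow_mul, neg_one_sq, one_pow]

namespace CliffordAlgebra

variable {R M : Type*} [CommRing R] [AddCommGroup M] [Module R M] {Q : QuadraticForm R M}

theorem ι_mul_prod_map_ι_of_isOrtho {v : M} {l : List M} (h : ∀ u ∈ l, Q.IsOrtho v u) :
    ι Q v * (l.map (ι Q)).prod = (-1 : R) ^ l.length • ((l.map (ι Q)).prod * ι Q v) := by
  induction l with
  | nil => simp
  | cons a t ih =>
    simp only [List.map_cons, List.prod_cons, List.length_cons, pow_succ']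
    rw [← mul_assoc, ι_mul_ι_comm_of_isOrtho (h a List.mem_cons_self), neg_mul, mul_assoc,
      ih fun u hu => h u (List.mem_cons_of_mem a hu), mul_smul_comm, mul_smul, ← mul_assoc,
      neg_one_smul, ← smul_neg]

theorem prod_map_ι_mul_ι_of_isOrtho {v : M} {l : List M} (h : ∀ u ∈ l, Q.IsOrtho v u) :
    (l.map (ι Q)).prod * ι Q v = (-1 : R) ^ l.length • (ι Q v * (l.map (ι Q)).prod) := by
  rw [ι_mul_prod_map_ι_of_isOrtho h, smul_smul, neg_one_pow_mul_neg_one_pow_self, one_smul]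

theorem ι_mul_involute_prod_map_ι_of_isOrtho {v : M} {l : List M} (h : ∀ u ∈ l, Q.IsOrtho v u) :
    ι Q v * involute (l.map (ι Q)).prod = (l.map (ι Q)).prod * ι Q v := by
  rw [involute_prod_map_ι, mul_smul_comm, ι_mul_prod_map_ι_of_isOrtho h, smul_smul,
    neg_one_pow_mul_neg_one_pow_self, one_smul]

theorem commute_ι_mul_ι_prod_map_ι_of_isOrtho {a b : M} {l : List M}
    (ha : ∀ u ∈ l, Q.IsOrtho a u) (hb : ∀ u ∈ l, Q.IsOrtho b u) :
    Commute (ι Q a * ι Q b) (l.map (ι Q)).prod := by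
  rw [Commute, SemiconjBy, mul_assoc, ι_mul_prod_map_ι_of_isOrtho hb, mul_smul_comm, ← mul_assoc,
    ι_mul_prod_map_ι_of_isOrtho ha, smul_mul_assoc, smul_smul,
    neg_one_pow_mul_neg_one_pow_self, one_smul, mul_assoc]

theorem prod_map_ι_mul_self_of_pairwise_isOrtho {l : List M} (h : l.Pairwise Q.IsOrtho) :
    (l.map (ι Q)).prod * (l.map (ι Q)).prod =
      (-1 : R) ^ (l.length * (l.length - 1) / 2) • algebraMap R _ (l.map Q).prod := by
  induction l with
  | nil => simp
  | cons a t ih =>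
    obtain ⟨ha, ht⟩ := List.pairwise_cons.mp h
    simp only [List.map_cons, List.prod_cons, List.length_cons, Nat.triangle_succ, pow_add,
      map_mul]
    rw [mul_assoc, ← mul_assoc _ (ι Q a), prod_map_ι_mul_ι_of_isOrtho ha, smul_mul_assoc,
      mul_smul_comm, ← mul_assoc, ← mul_assoc, ι_sq_scalar, mul_assoc, ih ht, mul_smul_comm,
      smul_smul, mul_comm]

theorem ι_mul_prod_map_ι_mul_ι_add_ι_mul_involute {a b : M} {l : List M}
    (hb : ∀ u ∈ l, Q.IsOrtho b u) :
    ι Q a * (l.map (ι Q)).prod * ι Q b + ι Q b * involute (ι Q a * (l.map (ι Q)).prod) =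
      (-1 : R) ^ l.length • ((ι Q a * ι Q b - ι Q b * ι Q a) * (l.map (ι Q)).prod) := by
  rw [mul_assoc, prod_map_ι_mul_ι_of_isOrtho hb, map_mul, involute_ι, involute_prod_map_ι]
  simp only [mul_smul_comm, neg_mul, mul_neg, sub_mul, mul_assoc]
  module

theorem ι_mul_ι_mul_ι_mul_ι (a b : M) :
    ι Q a * ι Q b * (ι Q a * ι Q b) =
      QuadraticMap.polar Q a b • (ι Q a * ι Q b) - algebraMap R _ (Q a * Q b) := by
  rw [← mul_assoc, ι_mul_ι_mul_ι, map_sub, map_smul, map_smul, sub_mul, smul_mul_assoc,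
    smul_mul_assoc, ι_sq_scalar, map_mul, ← Algebra.smul_def]

theorem ι_mul_ι_add_one_mul_self_of_polar_eq_neg_two {a b : M} (hab : QuadraticMap.polar Q a b = -2)
    (ha : Q a = 0) : (ι Q a * ι Q b + 1) * (ι Q a * ι Q b + 1) = 1 := by
  rw [add_mul, mul_add, ι_mul_ι_mul_ι_mul_ι, hab, ha, zero_mul, map_zero, sub_zero, mul_one,
    one_mul]
  module

end CliffordAlgebra

open QuadraticMap

variable {n : ℕ}

theorem Qn_eq : Qn n = LinearMap.BilinMap.toQuadraticMap (Matrix.toLinearMap₂' ℝ (BmatN n)) :=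
  rfl

theorem Qn_single (i : Fin (n + 2)) : Qn n (Pi.single i 1) = BmatN n i i := by
  simp [Qn_eq, LinearMap.BilinMap.toQuadraticMap_apply, Matrix.toLinearMap₂'_apply,
    Pi.single_apply]

theorem polar_Qn_single (i j : Fin (n + 2)) :
    polar (Qn n) (Pi.single i 1) (Pi.single j 1) = BmatN n i j + BmatN n j i := by
  simp [Qn_eq, LinearMap.BilinMap.polar_toQuadraticMap, Matrix.toLinearMap₂'_apply,
    Pi.single_apply]

theorem Qn_single_of_ne {i : Fin (n + 2)} (h0 : i ≠ 0) (hl : i ≠ Fin.last (n + 1)) :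
    Qn n (Pi.single i 1) = 1 := by
  simp [Qn_single, BmatN, h0, hl]

theorem Qn_single_zero : Qn n (Pi.single 0 1) = 0 := by
  simp [Qn_single, BmatN]

theorem polar_Qn_single_zero_last :
    polar (Qn n) (Pi.single 0 1) (Pi.single (Fin.last (n + 1)) 1) = -2 := by
  rw [polar_Qn_single]
  norm_num [BmatN, (Fin.last_pos).ne']

theorem isOrtho_Qn_single {i j : Fin (n + 2)} (h0 : i ≠ 0) (hl : i ≠ Fin.last (n + 1))
    (hij : i ≠ j) : (Qn n).IsOrtho (Pi.single i 1) (Pi.single j 1) := by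
  rw [← isOrtho_polarBilin, polarBilin_apply_apply, polar_Qn_single]
  simp [BmatN, h0, hl, hij, hij.symm]

theorem half_smul_ι_mul_ι_sub_swap_zero_last :
    (1 / 2 : ℝ) • (ι (Qn n) (Pi.single 0 1) * ι (Qn n) (Pi.single (Fin.last (n + 1)) 1) -
        ι (Qn n) (Pi.single (Fin.last (n + 1)) 1) * ι (Qn n) (Pi.single 0 1)) =
      ι (Qn n) (Pi.single 0 1) * ι (Qn n) (Pi.single (Fin.last (n + 1)) 1) + 1 := by
  rw [ι_mul_ι_comm (Pi.single (Fin.last (n + 1)) 1), polar_comm, polar_Qn_single_zero_last,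
    Algebra.algebraMap_eq_smul_one]
  module

theorem wedgeVecN_eq_mul {A : CliffordAlgebra (Qn n)} {v : Fin (n + 2) → ℝ}
    (h : ι (Qn n) v * involute A = A * ι (Qn n) v) : wedgeVecN A v = A * ι (Qn n) v := by
  rw [wedgeVecN, h, ← two_smul ℝ, smul_smul]
  norm_num

theorem foldl_wedgeVecN_prod_map_ι {p l : List (Fin (n + 2) → ℝ)}
    (h : (p ++ l).Pairwise (Qn n).IsOrtho) :
    l.foldl wedgeVecN (p.map (ι (Qn n))).prod = ((p ++ l).map (ι (Qn n))).prod := by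
  induction l generalizing p with
  | nil => simp
  | cons a t ih =>
    have hpa : ∀ u ∈ p, (Qn n).IsOrtho a u := fun u hu =>
      ((List.pairwise_append.mp h).2.2 u hu a List.mem_cons_self).symm
    have := ih (p := p ++ [a]) (by simpa using h)
    rw [List.foldl_cons, wedgeVecN_eq_mul (ι_mul_involute_prod_map_ι_of_isOrtho hpa)]
    simpa [List.prod_append] using this

def cgaEuclideanBasis (n : ℕ) : List (Fin (n + 2) → ℝ) :=
  (List.finRange n).map fun i => Pi.single (Fin.castSucc i.succ) 1

theorem length_cgaEuclideanBasis : (cgaEuclideanBasis n).length = n := by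
  simp [cgaEuclideanBasis]

theorem castSucc_succ_ne_zero (i : Fin n) : (Fin.castSucc i.succ : Fin (n + 2)) ≠ 0 :=
  Fin.castSucc_ne_zero_iff.mpr i.succ_ne_zero

theorem isOrtho_of_mem_cgaEuclideanBasis {v : Fin (n + 2) → ℝ} (hv : v ∈ cgaEuclideanBasis n)
    {j : Fin (n + 2)} (hj : ∀ i : Fin n, Fin.castSucc i.succ ≠ j) :
    (Qn n).IsOrtho (Pi.single j 1) v := by
  obtain ⟨i, -, rfl⟩ := List.mem_map.mp hv
  exact (isOrtho_Qn_single (castSucc_succ_ne_zero i) (Fin.castSucc_ne_last _) (hj i)).symm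

theorem isOrtho_single_zero_of_mem_cgaEuclideanBasis {v : Fin (n + 2) → ℝ}
    (hv : v ∈ cgaEuclideanBasis n) : (Qn n).IsOrtho (Pi.single 0 1) v :=
  isOrtho_of_mem_cgaEuclideanBasis hv castSucc_succ_ne_zero

theorem isOrtho_single_last_of_mem_cgaEuclideanBasis {v : Fin (n + 2) → ℝ}
    (hv : v ∈ cgaEuclideanBasis n) : (Qn n).IsOrtho (Pi.single (Fin.last (n + 1)) 1) v :=
  isOrtho_of_mem_cgaEuclideanBasis hv fun _ => Fin.castSucc_ne_last _

theorem Qn_of_mem_cgaEuclideanBasis {v : Fin (n + 2) → ℝ} (hv : v ∈ cgaEuclideanBasis n) :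
    Qn n v = 1 := by
  obtain ⟨i, -, rfl⟩ := List.mem_map.mp hv
  exact Qn_single_of_ne (castSucc_succ_ne_zero i) (Fin.castSucc_ne_last _)

theorem pairwise_isOrtho_cgaEuclideanBasis : (cgaEuclideanBasis n).Pairwise (Qn n).IsOrtho := by
  refine List.pairwise_map.mpr ((List.nodup_finRange n).imp fun {i j} hij => ?_)
  refine isOrtho_Qn_single (castSucc_succ_ne_zero i) (Fin.castSucc_ne_last _) ?_
  simpa [Fin.ext_iff] using hij

theorem In_eq_smul_mul_prod :
    In n = (-1 : ℝ) ^ n • ((ι (Qn n) (Pi.single 0 1) * ι (Qn n) (Pi.single (Fin.last (n + 1)) 1)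
      + 1) * ((cgaEuclideanBasis n).map (ι (Qn n))).prod) := by
  have hblade : (List.finRange n).foldl
      (fun A i => wedgeVecN A (Pi.single (Fin.castSucc i.succ) 1)) (ι (Qn n) (Pi.single 0 1)) =
      ι (Qn n) (Pi.single 0 1) * ((cgaEuclideanBasis n).map (ι (Qn n))).prod := by
    have h := foldl_wedgeVecN_prod_map_ι (p := [Pi.single 0 1]) (l := cgaEuclideanBasis n)
      (List.pairwise_cons.mpr
        ⟨fun _ => isOrtho_single_zero_of_mem_cgaEuclideanBasis, pairwise_isOrtho_cgaEuclideanBasis⟩)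
    simpa [cgaEuclideanBasis, List.foldl_map] using h
  rw [In, hblade, wedgeVecN, ι_mul_prod_map_ι_mul_ι_add_ι_mul_involute
    fun _ => isOrtho_single_last_of_mem_cgaEuclideanBasis,
    length_cgaEuclideanBasis, smul_comm, ← smul_mul_assoc, half_smul_ι_mul_ι_sub_swap_zero_last]

theorem In_mul_In : In n * In n = (-1 : ℝ) ^ (n * (n - 1) / 2) • 1 := by
  have hcomm := (commute_ι_mul_ι_prod_map_ι_of_isOrtho
    (fun _ => isOrtho_single_zero_of_mem_cgaEuclideanBasis (n := n))
    (fun _ => isOrtho_single_last_of_mem_cgaEuclideanBasis)).add_left (Commute.one_left _)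
  rw [In_eq_smul_mul_prod, smul_mul_smul_comm, neg_one_pow_mul_neg_one_pow_self, one_smul,
    hcomm.symm.mul_mul_mul_comm, ι_mul_ι_add_one_mul_self_of_polar_eq_neg_two polar_Qn_single_zero_last
    Qn_single_zero, one_mul, prod_map_ι_mul_self_of_pairwise_isOrtho
    pairwise_isOrtho_cgaEuclideanBasis, length_cgaEuclideanBasis,
    List.prod_eq_one fun x hx => ?_, map_one]
  obtain ⟨v, hv, rfl⟩ := List.mem_map.mp hx
  exact Qn_of_mem_cgaEuclideanBasis hv

/-- (Pseudoscalar square in general dimension.) For every `n ≥ 1`,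
`Iₙ² = (−1)^{n(n−1)/2}`; consequently `Iₙ⁻¹ = (−1)^{n(n−1)/2} Iₙ`. -/
theorem In_sq : ∀ n : ℕ, 1 ≤ n →
    In n * In n = ((-1 : ℝ) ^ (n * (n - 1) / 2)) • (1 : CliffordAlgebra (Qn n)) ∧
    In n * (((-1 : ℝ) ^ (n * (n - 1) / 2)) • In n) = 1 ∧
    (((-1 : ℝ) ^ (n * (n - 1) / 2)) • In n) * In n = 1 := by
  intro n _
  refine ⟨In_mul_In, ?_, ?_⟩
  · rw [mul_smul_comm, In_mul_In, smul_smul, neg_one_pow_mul_neg_one_pow_self, one_smul]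
  · rw [smul_mul_assoc, In_mul_In, smul_smul, neg_one_pow_mul_neg_one_pow_self, one_smul]
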